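/- Let M(Λ) be the Verma module over B(ℤ) with maximal proper submodule M' (assuming M(Λ) reducible), and let f(t) be the monic polynomial of minimal degree with x^{-1} f(t)·v_Λ ∈ M' in the realization B(ℤ) ⊂ 𝔽[x,x^{-1},t] ⊕ 𝔽c. Then for every g(t) ∈ 𝔽[t]: Λ(f'(t)g(t) + f(t)g'(t) - f(0)g(0)c) = 0. -/

import Mathlib

open UniversalEnvelopingAlgebra

/-- Indices `i ∈ ℤ`, `i ≥ -1`. -/
abbrev BIdx : Type := {i : ℤ // -1 ≤ i}

variable {F : Type*} [Field F] [CharZero F]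
variable {B : Type*} [LieRing B] [LieAlgebra F B]

open scoped Classical in
/-- The family `L : ℤ → BIdx → B` together with `c : B` satisfies the defining
relations of the Block type Lie algebra `B(ℤ)`:
`[L_{α,i}, L_{β,j}] = ((i+1)β - (j+1)α) L_{α+β,i+j} + α δ_{α,-β} δ_{i+j,-2} c`
(the term `L_{α+β,i+j}` being interpreted as `0` when `i+j < -1`), and
`[c, L_{α,i}] = 0`. -/
def IsBlockAlgebraZ (L : ℤ → BIdx → B) (c : B) : Prop :=
  (∀ (α β : ℤ) (i j : BIdx),
      ⁅L α i, L β j⁆ =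
        (if h : (-1 : ℤ) ≤ i.1 + j.1 then
            ((((i.1 : F) + 1) * (β : F)) - (((j.1 : F) + 1) * (α : F))) •
              L (α + β) ⟨i.1 + j.1, h⟩
          else 0)
        + (if α = -β ∧ i.1 + j.1 = -2 then (α : F) • c else 0))
  ∧ (∀ (α : ℤ) (i : BIdx), ⁅c, L α i⁆ = 0)

section Verma

variable (F) (L : ℤ → BIdx → B) (c : B) (Λ0 : BIdx → F) (Λc : F)

/-- The generators of the left ideal `I(Λ)` of `U(B(ℤ))` (with the normal order
on `ℤ`): the elements `L_{α,i}` with `α > 0`, and `h - Λ(h)·1` for `h` among the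
spanning vectors `L_{0,i}` and `c` of `B(ℤ)_0`, where `Λ0 : BIdx → F` and
`Λc : F` record the values of `Λ ∈ B(ℤ)_0^*` on them. -/
def vermaGensZ : Set (UniversalEnvelopingAlgebra F B) :=
  {x | ∃ (α : ℤ) (i : BIdx), 0 < α ∧ x = ι F (L α i)}
    ∪ {x | ∃ i : BIdx, x = ι F (L 0 i) - algebraMap F (UniversalEnvelopingAlgebra F B) (Λ0 i)}
    ∪ {ι F c - algebraMap F (UniversalEnvelopingAlgebra F B) Λc}

/-- The left ideal `I(Λ)` of `U(B(ℤ))`. -/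
def vermaIdealZ : Submodule (UniversalEnvelopingAlgebra F B) (UniversalEnvelopingAlgebra F B) :=
  Submodule.span (UniversalEnvelopingAlgebra F B) (vermaGensZ F L c Λ0 Λc)

/-- The Verma module `M(Λ) = U(B(ℤ)) / I(Λ)`. -/
abbrev VermaModZ : Type _ :=
  UniversalEnvelopingAlgebra F B ⧸ vermaIdealZ F L c Λ0 Λc

/-- The highest weight vector `v_Λ`, the image of `1` in `M(Λ)`. -/
def hwVecZ : VermaModZ F L c Λ0 Λc :=
  Submodule.Quotient.mk 1

/-- The monomial `L_{α_1,i_1} ⋯ L_{α_k,i_k} ∈ U(B(ℤ))` attached to the list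
`l = [(α_1,i_1),…,(α_k,i_k)]`. -/
def blockMonoZ (l : List (ℤ × BIdx)) : UniversalEnvelopingAlgebra F B :=
  (l.map fun p => ι F (L p.1 p.2)).prod

/-- The element `x⁻¹ f(t) = Σ_j f_j L_{-1, j-1}` of `B(ℤ)`, for `f = Σ_j f_j t^j`
a polynomial (in the realization `L_{α,i} = x^α t^{i+1}`). -/
noncomputable def xinvPoly (f : Polynomial F) : B :=
  f.sum fun j a => a • L (-1) ⟨(j : ℤ) - 1, by omega⟩

end Verma

/-- The value `Λ(p(t))` of `Λ ∈ B(ℤ)_0^*` on the polynomial `p(t)`, where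
`t^j = L_{0,j-1}` in the realization `L_{α,i} = x^α t^{i+1}`. -/
noncomputable def lambdaPoly (Λ0 : BIdx → F) (p : Polynomial F) : F :=
  p.sum fun j a => a * Λ0 ⟨(j : ℤ) - 1, by omega⟩

-- ===================== auxiliary lemmas =====================

lemma lie_finset_sum {α : Type*} (s : Finset α) (x : B) (g : α → B) :
    ⁅x, ∑ i ∈ s, g i⁆ = ∑ i ∈ s, ⁅x, g i⁆ := by
  induction s using Finset.cons_induction with
  | empty => simp
  | cons a s ha ih => simp [Finset.sum_cons, ih]

section AuxV
variable (L : ℤ → BIdx → B) (c : B) (Λ0 : BIdx → F) (Λc : F)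

lemma ideal_smul_hw {z : UniversalEnvelopingAlgebra F B}
    (hz : z ∈ vermaIdealZ F L c Λ0 Λc) :
    z • hwVecZ F L c Λ0 Λc = 0 := by
  show z • Submodule.Quotient.mk 1 = 0
  rw [← Submodule.Quotient.mk_smul, smul_eq_mul, mul_one, Submodule.Quotient.mk_eq_zero]
  exact hz

lemma pos_smul_hw (α : ℤ) (i : BIdx) (hα : 0 < α) :
    (ι F (L α i) : UniversalEnvelopingAlgebra F B) • hwVecZ F L c Λ0 Λc = 0 :=
  ideal_smul_hw L c Λ0 Λc (Submodule.subset_span (Or.inl (Or.inl ⟨α, i, hα, rfl⟩)))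

lemma zero_smul_hw (i : BIdx) :
    (ι F (L 0 i) : UniversalEnvelopingAlgebra F B) • hwVecZ F L c Λ0 Λc =
      algebraMap F (UniversalEnvelopingAlgebra F B) (Λ0 i) • hwVecZ F L c Λ0 Λc := by
  have h := ideal_smul_hw L c Λ0 Λc
    (Submodule.subset_span (Or.inl (Or.inr ⟨i, rfl⟩)))
  rw [sub_smul, sub_eq_zero] at h
  exact h

lemma c_smul_hw :
    (ι F c : UniversalEnvelopingAlgebra F B) • hwVecZ F L c Λ0 Λc =
      algebraMap F (UniversalEnvelopingAlgebra F B) Λc • hwVecZ F L c Λ0 Λc := by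
  have h := ideal_smul_hw L c Λ0 Λc
    (Submodule.subset_span (Or.inr rfl))
  rw [sub_smul, sub_eq_zero] at h
  exact h

end AuxV

lemma lambdaPoly_add (Λ0 : BIdx → F) (p q : Polynomial F) :
    lambdaPoly Λ0 (p + q) = lambdaPoly Λ0 p + lambdaPoly Λ0 q :=
  Polynomial.sum_add_index p q _ (fun _ => zero_mul _) (fun _ a b => add_mul a b _)

lemma lambdaPoly_monomial (Λ0 : BIdx → F) (m : ℕ) (bb : F) :
    lambdaPoly Λ0 (Polynomial.monomial m bb) = bb * Λ0 ⟨(m : ℤ) - 1, by omega⟩ :=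
  Polynomial.sum_monomial_index bb _ (zero_mul _)

lemma lambdaPoly_finset_sum {α : Type*} (Λ0 : BIdx → F) (s : Finset α) (p : α → Polynomial F) :
    lambdaPoly Λ0 (∑ i ∈ s, p i) = ∑ i ∈ s, lambdaPoly Λ0 (p i) := by
  induction s using Finset.cons_induction with
  | empty => simp [lambdaPoly, Polynomial.sum_zero_index]
  | cons a s ha ih => rw [Finset.sum_cons, Finset.sum_cons, lambdaPoly_add, ih]

lemma lam_congr (Λ0 : BIdx → F) {x y : ℤ} (hx : -1 ≤ x) (hy : -1 ≤ y) (e : x = y) :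
    Λ0 ⟨x, hx⟩ = Λ0 ⟨y, hy⟩ := by subst e; rfl

/-- Let `M'` be the maximal proper submodule of the (reducible) Verma module
`M(Λ)` over `B(ℤ)`, and `f(t)` the monic polynomial of minimal degree with
`x⁻¹ f(t)·v_Λ ∈ M'`. Then for every `g(t) ∈ F[t]`:
`Λ(f'(t)g(t) + f(t)g'(t) - f(0)g(0)c) = 0`. -/
theorem verma_characteristic_polynomial (L : ℤ → BIdx → B) (c : B)
    (hrel : IsBlockAlgebraZ (F := F) L c)
    (b : Module.Basis ((ℤ × BIdx) ⊕ Unit) F B)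
    (hbL : ∀ p : ℤ × BIdx, b (Sum.inl p) = L p.1 p.2)
    (hbc : b (Sum.inr ()) = c)
    (Λ0 : BIdx → F) (Λc : F)
    (M' : Submodule (UniversalEnvelopingAlgebra F B) (VermaModZ F L c Λ0 Λc))
    (hM'proper : M' ≠ ⊤)
    (hM'max : ∀ N : Submodule (UniversalEnvelopingAlgebra F B) (VermaModZ F L c Λ0 Λc),
      N ≠ ⊤ → N ≤ M')
    (hred : M' ≠ ⊥)
    (f : Polynomial F) (hmonic : f.Monic)
    (hf : (ι F (xinvPoly F L f) : UniversalEnvelopingAlgebra F B) •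
      hwVecZ F L c Λ0 Λc ∈ M')
    (hmin : ∀ g : Polynomial F, g ≠ 0 →
      (ι F (xinvPoly F L g) : UniversalEnvelopingAlgebra F B) •
        hwVecZ F L c Λ0 Λc ∈ M' → f.degree ≤ g.degree) :
    ∀ g : Polynomial F,
      lambdaPoly Λ0 (Polynomial.derivative f * g + f * Polynomial.derivative g)
        - f.coeff 0 * g.coeff 0 * Λc = 0 := by
  classical
  set v := hwVecZ F L c Λ0 Λc with hv
  set S : ℕ → F := fun n => f.sum fun k a => a *
      ((if h : (-1 : ℤ) ≤ ((n : ℤ) - 1) + ((k : ℤ) - 1) then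
          (-(n : F) - (k : F)) * Λ0 ⟨((n : ℤ) - 1) + ((k : ℤ) - 1), h⟩
        else 0)
       + (if ((n : ℤ) - 1) + ((k : ℤ) - 1) = -2 then Λc else 0)) with hSdef
  have bact : ∀ n : ℕ,
      (ι F ⁅L 1 ⟨(n : ℤ) - 1, by omega⟩, xinvPoly F L f⁆ : UniversalEnvelopingAlgebra F B) • v
        = algebraMap F (UniversalEnvelopingAlgebra F B) (S n) • v := by
    intro n
    have hSn : S n = ∑ k ∈ f.support, (f.coeff k *
        ((if h : (-1 : ℤ) ≤ ((n : ℤ) - 1) + ((k : ℤ) - 1) then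
            (-(n : F) - (k : F)) * Λ0 ⟨((n : ℤ) - 1) + ((k : ℤ) - 1), h⟩
          else 0)
         + (if ((n : ℤ) - 1) + ((k : ℤ) - 1) = -2 then Λc else 0))) := by
      simp only [hSdef, Polynomial.sum_def]
    have ιsum : ∀ (s : Finset ℕ) (g : ℕ → B),
        (ι F (∑ i ∈ s, g i) : UniversalEnvelopingAlgebra F B) = ∑ i ∈ s, ι F (g i) := by
      intro s g
      simpa using map_sum ((ι F : B →ₗ⁅F⁆ UniversalEnvelopingAlgebra F B) : B →ₗ[F] _) g s
    rw [hSn, map_sum, Finset.sum_smul, xinvPoly, Polynomial.sum_def, lie_finset_sum,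
      ιsum, Finset.sum_smul]
    refine Finset.sum_congr rfl fun k hk => ?_
    rw [lie_smul, hrel.1 1 (-1) ⟨(n : ℤ) - 1, by omega⟩ ⟨(k : ℤ) - 1, by omega⟩]
    by_cases hc : (-1 : ℤ) ≤ ((n : ℤ) - 1) + ((k : ℤ) - 1)
    · have hne : ¬(((n : ℤ) - 1) + ((k : ℤ) - 1) = -2) := by omega
      rw [dif_pos hc, dif_pos hc, if_neg (fun hcon => hne hcon.2), if_neg hne]
      rw [add_zero, add_zero, map_smul, map_smul]
      have h01 : (1 : ℤ) + -1 = 0 := by norm_num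
      rw [h01, smul_smul, Algebra.smul_def, mul_smul, zero_smul_hw L c Λ0 Λc, ← mul_smul,
        ← map_mul]
      congr 2
      push_cast
      ring
    · rw [dif_neg hc, dif_neg hc, zero_add, zero_add]
      by_cases he : ((n : ℤ) - 1) + ((k : ℤ) - 1) = -2
      · rw [if_pos ⟨by norm_num, he⟩, if_pos he, map_smul, map_smul,
          smul_smul, Algebra.smul_def, mul_smul, c_smul_hw L c Λ0 Λc, ← mul_smul, ← map_mul]
        congr 2
        push_cast
        ring
      · rw [if_neg (fun hcon => he hcon.2), if_neg he, smul_zero, map_zero,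
          zero_smul, mul_zero, map_zero, zero_smul]
  have hMem : ∀ n : ℕ, algebraMap F (UniversalEnvelopingAlgebra F B) (S n) • v ∈ M' := by
    intro n
    set u := (ι F (xinvPoly F L f) : UniversalEnvelopingAlgebra F B) with hu
    set y := (ι F (L 1 ⟨(n : ℤ) - 1, by omega⟩) : UniversalEnvelopingAlgebra F B) with hy
    have h1 : (y * u) • v ∈ M' := by rw [mul_smul]; exact M'.smul_mem y hf
    have h2 : (u * y) • v = 0 := by
      rw [mul_smul, hy, pos_smul_hw L c Λ0 Λc 1 _ one_pos, smul_zero]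
    have h3 : (ι F ⁅L 1 ⟨(n : ℤ) - 1, by omega⟩, xinvPoly F L f⁆ :
        UniversalEnvelopingAlgebra F B) = y * u - u * y := by
      simp only [LieHom.map_lie, Ring.lie_def, hy, hu]
    rw [← bact n, h3, sub_smul, h2, sub_zero]
    exact h1
  have hvnot : v ∉ M' := by
    intro hvm
    apply hM'proper
    rw [eq_top_iff]
    intro x _
    obtain ⟨u, rfl⟩ := Submodule.Quotient.mk_surjective _ x
    have he : u • v = Submodule.Quotient.mk u := by
      show u • Submodule.Quotient.mk 1 = _
      rw [← Submodule.Quotient.mk_smul, smul_eq_mul, mul_one]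
    rw [← he]
    exact M'.smul_mem u hvm
  have hS0 : ∀ n : ℕ, S n = 0 := by
    intro n
    by_contra hne
    apply hvnot
    have h5 := M'.smul_mem (algebraMap F (UniversalEnvelopingAlgebra F B) (S n)⁻¹) (hMem n)
    rwa [← mul_smul, ← map_mul, inv_mul_cancel₀ hne, map_one, one_smul] at h5
  intro g
  induction g using Polynomial.induction_on' with
  | add p q hp hq =>
    have e : Polynomial.derivative f * (p + q) + f * Polynomial.derivative (p + q)
        = (Polynomial.derivative f * p + f * Polynomial.derivative p)
          + (Polynomial.derivative f * q + f * Polynomial.derivative q) := by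
      rw [Polynomial.derivative_add]; ring
    rw [e, lambdaPoly_add, Polynomial.coeff_add]
    linear_combination hp + hq
  | monomial n a =>
    have hS' : ∑ k ∈ f.support, (f.coeff k *
        ((if h : (-1 : ℤ) ≤ ((n : ℤ) - 1) + ((k : ℤ) - 1) then
            (-(n : F) - (k : F)) * Λ0 ⟨((n : ℤ) - 1) + ((k : ℤ) - 1), h⟩
          else 0)
         + (if ((n : ℤ) - 1) + ((k : ℤ) - 1) = -2 then Λc else 0))) = 0 := by
      have h := hS0 n
      simp only [hSdef] at h
      rwa [Polynomial.sum_def] at h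
    have e1 : Polynomial.derivative f * Polynomial.monomial n a
        = ∑ k ∈ f.support, Polynomial.monomial (k - 1 + n) (f.coeff k * (k : F) * a) := by
      rw [Polynomial.derivative_apply, Polynomial.sum_def, Finset.sum_mul]
      refine Finset.sum_congr rfl fun k _ => ?_
      rw [Polynomial.C_mul_X_pow_eq_monomial, Polynomial.monomial_mul_monomial]
    have e2 : f * Polynomial.derivative (Polynomial.monomial n a)
        = ∑ k ∈ f.support, Polynomial.monomial (k + (n - 1)) (f.coeff k * (a * (n : F))) := by
      rw [Polynomial.derivative_monomial]
      conv_lhs => rw [Polynomial.as_sum_support f]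
      rw [Finset.sum_mul]
      exact Finset.sum_congr rfl fun k _ => Polynomial.monomial_mul_monomial _ _ _ _
    rw [e1, e2, lambdaPoly_add, lambdaPoly_finset_sum, lambdaPoly_finset_sum,
      Polynomial.coeff_monomial]
    simp only [lambdaPoly_monomial]
    rw [← Finset.sum_add_distrib]
    have key : ∀ k ∈ f.support,
        (f.coeff k * (k : F) * a) * Λ0 ⟨((k - 1 + n : ℕ) : ℤ) - 1, by omega⟩
          + (f.coeff k * (a * (n : F))) * Λ0 ⟨((k + (n - 1) : ℕ) : ℤ) - 1, by omega⟩
        = (if k = 0 then f.coeff 0 * (if n = 0 then a else 0) * Λc else 0)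
          - a * (f.coeff k *
            ((if h : (-1 : ℤ) ≤ ((n : ℤ) - 1) + ((k : ℤ) - 1) then
                (-(n : F) - (k : F)) * Λ0 ⟨((n : ℤ) - 1) + ((k : ℤ) - 1), h⟩
              else 0)
             + (if ((n : ℤ) - 1) + ((k : ℤ) - 1) = -2 then Λc else 0))) := by
      intro k _
      by_cases hk : k = 0
      · subst hk
        by_cases hn : n = 0
        · subst hn
          rw [dif_neg (show ¬((-1:ℤ) ≤ ((((0:ℕ)):ℤ)-1) + ((((0:ℕ)):ℤ)-1)) by omega),
            if_pos (show ((((0:ℕ)):ℤ)-1) + ((((0:ℕ)):ℤ)-1) = -2 by omega),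
            if_pos (rfl : (0:ℕ) = 0), if_pos (rfl : (0:ℕ) = 0)]
          push_cast
          ring
        · rw [dif_pos (show (-1:ℤ) ≤ ((n:ℤ)-1) + (((0:ℕ):ℤ)-1) by omega),
            if_neg (show ¬(((n:ℤ)-1) + (((0:ℕ):ℤ)-1) = -2) by omega),
            if_pos (rfl : (0:ℕ) = 0), if_neg hn]
          have eΛ : Λ0 ⟨(((0:ℕ) + (n - 1) : ℕ) : ℤ) - 1, by omega⟩
              = Λ0 ⟨((n : ℤ) - 1) + (((0:ℕ) : ℤ) - 1), by omega⟩ :=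
            lam_congr Λ0 _ _ (by omega)
          push_cast at eΛ ⊢
          linear_combination (f.coeff 0 * a * (n : F)) * eΛ
      · by_cases hn : n = 0
        · subst hn
          rw [dif_pos (show (-1:ℤ) ≤ ((((0:ℕ)):ℤ)-1) + (((k):ℤ)-1) by omega),
            if_neg (show ¬(((((0:ℕ)):ℤ)-1) + (((k):ℤ)-1) = -2) by omega), if_neg hk]
          have eΛ : Λ0 ⟨((k - 1 + (0:ℕ) : ℕ) : ℤ) - 1, by omega⟩
              = Λ0 ⟨(((0:ℕ) : ℤ) - 1) + ((k : ℤ) - 1), by omega⟩ :=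
            lam_congr Λ0 _ _ (by omega)
          push_cast [hk] at eΛ ⊢
          linear_combination (f.coeff k * (k : F) * a) * eΛ
        · rw [dif_pos (show (-1:ℤ) ≤ (((n):ℤ)-1) + (((k):ℤ)-1) by omega),
            if_neg (show ¬((((n):ℤ)-1) + (((k):ℤ)-1) = -2) by omega), if_neg hk]
          have eΛ1 : Λ0 ⟨((k - 1 + n : ℕ) : ℤ) - 1, by omega⟩
              = Λ0 ⟨((n : ℤ) - 1) + ((k : ℤ) - 1), by omega⟩ :=
            lam_congr Λ0 _ _ (by omega)
          have eΛ2 : Λ0 ⟨((k + (n - 1) : ℕ) : ℤ) - 1, by omega⟩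
              = Λ0 ⟨((n : ℤ) - 1) + ((k : ℤ) - 1), by omega⟩ :=
            lam_congr Λ0 _ _ (by omega)
          push_cast at eΛ1 eΛ2 ⊢
          linear_combination (f.coeff k * (k : F) * a) * eΛ1
            + (f.coeff k * (a * (n : F))) * eΛ2
    rw [Finset.sum_congr rfl key, Finset.sum_sub_distrib, Finset.sum_ite_eq',
      ← Finset.mul_sum, hS', mul_zero, sub_zero]
    by_cases h0 : (0 : ℕ) ∈ f.support
    · rw [if_pos h0, sub_self]
    · rw [if_neg h0, Polynomial.notMem_support_iff.mp h0]
      ring
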